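/- arXiv:2510.16638 — 2 statements merged into one kernel-verified Lean document; each statement's English description precedes it below -/
import Mathlib

section
/- Let x be a point such that x(u) ≠ 0 implies ⟨p_r, u⟩ = 0 for all r ≤ k (the support of x is contained in τ^⊥, i.e. x lies in the closure of the orbit of the torus fixed-point locus corresponding to faces γ ⊇ τ). Then x*x = x if and only if x(u) ∈ {0, 1} for all u ∈ S. (This is the point-level content of case (1) of Theorem 7.1: for a face γ of σ with τ ⊆ γ, the set of idempotents in the torus orbit O_γ is exactly {x_γ}.) -/
open Finset

def pairZ {n : ℕ} (v u : Fin n → ℤ) : ℤ := ∑ i, v i * u i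

def InS {n m : ℕ} (q : Fin m → Fin n → ℤ) (u : Fin n → ℤ) : Prop :=
  ∀ j, 0 ≤ pairZ (q j) u

def IsPoint {n m : ℕ} {K : Type*} [Field K] (q : Fin m → Fin n → ℤ)
    (x : (Fin n → ℤ) → K) : Prop :=
  x 0 = 1 ∧ ∀ u v : Fin n → ℤ, InS q u → InS q v → x (u + v) = x u * x v

def Compatible {n m k : ℕ} (hkm : k ≤ m) (q : Fin m → Fin n → ℤ)
    (e : Fin k → Fin n → ℤ) : Prop :=
  (∀ r s : Fin k, pairZ (q (Fin.castLE hkm s)) (e r) = if r = s then -1 else 0) ∧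
  (∀ (r : Fin k) (j : Fin m), k ≤ (j : ℕ) → 0 ≤ pairZ (q j) (e r))

noncomputable def rmul {n m k : ℕ} {K : Type*} [Field K] (hkm : k ≤ m)
    (q : Fin m → Fin n → ℤ) (e1 e2 : Fin k → Fin n → ℤ)
    (x y : (Fin n → ℤ) → K) : (Fin n → ℤ) → K :=
  fun u =>
    ∑ i ∈ Fintype.piFinset (fun r : Fin k =>
        Finset.range ((pairZ (q (Fin.castLE hkm r)) u).toNat + 1)),
      (∏ r : Fin k, ((pairZ (q (Fin.castLE hkm r)) u).toNat.choose (i r) : K)) *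
        x (u + ∑ r : Fin k, (i r : ℤ) • e2 r) *
        y (u + ∑ r : Fin k, (pairZ (q (Fin.castLE hkm r)) u - (i r : ℤ)) • e1 r)

noncomputable def xtau {n m k : ℕ} (K : Type*) [Field K] (hkm : k ≤ m)
    (q : Fin m → Fin n → ℤ) : (Fin n → ℤ) → K :=
  fun u => if ∀ r : Fin k, pairZ (q (Fin.castLE hkm r)) u = 0 then 1 else 0

/-!
By compatibility of the Demazure roots, `⟨p_r, u + ∑ i_s e₂⁽ˢ⁾⟩ = ⟨p_r, u⟩ - i_r` and
`⟨p_r, u + ∑ (⟨p_s, u⟩ - i_s) e₁⁽ˢ⁾⟩ = i_r`, and both shifted points stay in `S`. If `x` and `y`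
are supported in `τ^⊥`, a summand of `(x * y)(u)` can therefore only be nonzero when
`⟨p_r, u⟩ = 0` for all `r`, and then the sum has the single summand `i = 0`. Hence `x * y` is
the pointwise product on `S`, and `x * x = x` says exactly that every value of `x` is idempotent
in `K`.
-/

lemma pairZ_add_sum_smul {n k : ℕ} (v u : Fin n → ℤ) (c : Fin k → ℤ)
    (e : Fin k → Fin n → ℤ) :
    pairZ v (u + ∑ r, c r • e r) = pairZ v u + ∑ r, c r * pairZ v (e r) := by
  change v ⬝ᵥ (u + ∑ r, c r • e r) = v ⬝ᵥ u + ∑ r, c r * v ⬝ᵥ e r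
  simp only [dotProduct_add, dotProduct_sum, dotProduct_smul, smul_eq_mul]

section

variable {n m k : ℕ} (hkm : k ≤ m) (q : Fin m → Fin n → ℤ)

def SupportedInPerp {K : Type*} [Field K] (x : (Fin n → ℤ) → K) : Prop :=
  ∀ u : Fin n → ℤ, InS q u → x u ≠ 0 → ∀ r : Fin k, pairZ (q (Fin.castLE hkm r)) u = 0

variable {hkm q}

lemma Compatible.pairZ_add_sum_smul {e : Fin k → Fin n → ℤ} (he : Compatible hkm q e)
    (u : Fin n → ℤ) (c : Fin k → ℤ) (s : Fin k) :
    pairZ (q (Fin.castLE hkm s)) (u + ∑ r, c r • e r) = pairZ (q (Fin.castLE hkm s)) u - c s := by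
  rw [_root_.pairZ_add_sum_smul]
  simp [he.1, sub_eq_add_neg]

lemma Compatible.inS_add_sum_smul {e : Fin k → Fin n → ℤ} (he : Compatible hkm q e)
    {u : Fin n → ℤ} (hu : InS q u) {c : Fin k → ℤ} (hc : ∀ r, 0 ≤ c r)
    (hcu : ∀ r, c r ≤ pairZ (q (Fin.castLE hkm r)) u) :
    InS q (u + ∑ r, c r • e r) := by
  intro j
  by_cases hj : (j : ℕ) < k
  · have hjk : Fin.castLE hkm ⟨j, hj⟩ = j := Fin.ext rfl
    rw [← hjk, he.pairZ_add_sum_smul]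
    linarith [hcu ⟨j, hj⟩]
  · rw [_root_.pairZ_add_sum_smul]
    exact add_nonneg (hu j) <| sum_nonneg fun r _ =>
      mul_nonneg (hc r) (he.2 r j (not_lt.mp hj))

variable {K : Type*} [Field K] {e1 e2 : Fin k → Fin n → ℤ} {x y : (Fin n → ℤ) → K}
  {u : Fin n → ℤ}

lemma rmul_apply_of_forall_pairZ_eq_zero
    (hperp : ∀ r : Fin k, pairZ (q (Fin.castLE hkm r)) u = 0) :
    rmul hkm q e1 e2 x y u = x u * y u := by
  simp [rmul, hperp]

lemma rmul_apply_eq_zero (he1 : Compatible hkm q e1) (he2 : Compatible hkm q e2)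
    (hx : SupportedInPerp hkm q x) (hy : SupportedInPerp hkm q y) (hu : InS q u)
    {r : Fin k} (hr : pairZ (q (Fin.castLE hkm r)) u ≠ 0) :
    rmul hkm q e1 e2 x y u = 0 := by
  refine sum_eq_zero fun i hi => ?_
  have hiu : ∀ s, (i s : ℤ) ≤ pairZ (q (Fin.castLE hkm s)) u := fun s => by
    have := mem_range.mp (Fintype.mem_piFinset.mp hi s)
    have := hu (Fin.castLE hkm s)
    omega
  rcases eq_or_ne (x (u + ∑ s, (i s : ℤ) • e2 s)) 0 with hxA | hxA
  · rw [hxA, mul_zero, zero_mul]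
  rcases eq_or_ne (y (u + ∑ s, (pairZ (q (Fin.castLE hkm s)) u - i s) • e1 s)) 0 with hyB | hyB
  · rw [hyB, mul_zero]
  have hA := hx _ (he2.inS_add_sum_smul hu (fun s => Int.natCast_nonneg _) hiu) hxA r
  have hB := hy _ (he1.inS_add_sum_smul hu (fun s => sub_nonneg.mpr (hiu s))
    (fun s => sub_le_self _ (Int.natCast_nonneg _))) hyB r
  rw [he2.pairZ_add_sum_smul] at hA
  rw [he1.pairZ_add_sum_smul] at hB
  omega

lemma rmul_apply_eq_mul (he1 : Compatible hkm q e1) (he2 : Compatible hkm q e2)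
    (hx : SupportedInPerp hkm q x) (hy : SupportedInPerp hkm q y) (hu : InS q u) :
    rmul hkm q e1 e2 x y u = x u * y u := by
  by_cases hperp : ∀ r : Fin k, pairZ (q (Fin.castLE hkm r)) u = 0
  · exact rmul_apply_of_forall_pairZ_eq_zero hperp
  · obtain ⟨r, hr⟩ := not_forall.mp hperp
    have hxu : x u = 0 := by_contra fun h => hr (hx u hu h r)
    rw [rmul_apply_eq_zero he1 he2 hx hy hu hr, hxu, zero_mul]

end

theorem statement_12_general {n m k : ℕ} {K : Type*} [Field K]
    (hkm : k ≤ m)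
    (q : Fin m → Fin n → ℤ) (e1 e2 : Fin k → Fin n → ℤ)
    (he1 : Compatible hkm q e1) (he2 : Compatible hkm q e2)
    (x : (Fin n → ℤ) → K)
    (hsupp : ∀ u : Fin n → ℤ, InS q u → x u ≠ 0 →
      ∀ r : Fin k, pairZ (q (Fin.castLE hkm r)) u = 0) :
    (∀ u : Fin n → ℤ, InS q u → rmul hkm q e1 e2 x x u = x u) ↔
    (∀ u : Fin n → ℤ, InS q u → x u = 0 ∨ x u = 1) :=
  forall₂_congr fun _ hu => by
    rw [rmul_apply_eq_mul he1 he2 hsupp hsupp hu]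
    exact IsIdempotentElem.iff_eq_zero_or_one

theorem statement_12 {n m k : ℕ} {K : Type*} [Field K] [CharZero K]
    (hn : 1 ≤ n) (hk : 1 ≤ k) (hkm : k ≤ m)
    (q : Fin m → Fin n → ℤ) (e1 e2 : Fin k → Fin n → ℤ)
    (he1 : Compatible hkm q e1) (he2 : Compatible hkm q e2)
    (x : (Fin n → ℤ) → K) (hx : IsPoint q x)
    (hsupp : ∀ u : Fin n → ℤ, InS q u → x u ≠ 0 →
      ∀ r : Fin k, pairZ (q (Fin.castLE hkm r)) u = 0) :
    (∀ u : Fin n → ℤ, InS q u → rmul hkm q e1 e2 x x u = x u) ↔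
    (∀ u : Fin n → ℤ, InS q u → x u = 0 ∨ x u = 1) :=
  statement_12_general hkm q e1 e2 he1 he2 x hsupp
end

section
/- Let x be an idempotent (x*x = x), fix r ≤ k, and let u ∈ S satisfy ⟨p_s, u⟩ = δ_{sr} for all s ≤ k. If x(u + e_1^{(r)}) ≠ 0 and x(u + e_2^{(r)}) ≠ 0, then x(u) = 0. (This is the point-level content of case (2.2) of Theorem 7.1: if for some ray p_r ∉ γ both Demazure roots e_1^{(r)}, e_2^{(r)} lie in γ^⊥, then the torus orbit O_γ contains no idempotents.) -/
open Finset

/-! Where all pairings with `τ` vanish, only the term `i = 0` survives in `x * x`, so there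
`x * x = x` forces `x = x²`, i.e. `x ∈ {0, 1}`; this applies at `u + e₁` and `u + e₂`. At `u`
itself exactly the two terms `i = 0` and `i = δ_r` survive, and idempotency reads
`x(u) = x(u) x(u + e₁) + x(u + e₂) x(u) = 2 x(u)`. -/

lemma pairZ_add {n : ℕ} (v a b : Fin n → ℤ) :
    pairZ v (a + b) = pairZ v a + pairZ v b := by
  simp [pairZ, mul_add, Finset.sum_add_distrib]

lemma le_single_one_iff {ι : Type*} [DecidableEq ι] (r : ι) (i : ι → ℕ) :
    i ≤ Pi.single r 1 ↔ i = 0 ∨ i = Pi.single r 1 := by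
  constructor
  · intro hi
    have hoff : ∀ s, s ≠ r → i s = 0 := fun s hs => by simpa [hs] using hi s
    rcases Nat.le_one_iff_eq_zero_or_eq_one.mp (by simpa using hi r) with h | h
    · left; funext s; by_cases hs : s = r
      · simpa [hs] using h
      · simpa using hoff s hs
    · right; funext s; by_cases hs : s = r
      · simpa [hs] using h
      · simpa [hs] using hoff s hs
  · rintro (rfl | rfl) <;> simp

section Demazure

variable {n m k : ℕ} {K : Type*} [Field K] {hkm : k ≤ m} {q : Fin m → Fin n → ℤ}
  {e1 e2 : Fin k → Fin n → ℤ}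

lemma rmul_apply_of_pairZ_eq_zero (x y : (Fin n → ℤ) → K) {v : Fin n → ℤ}
    (hv : ∀ s : Fin k, pairZ (q (Fin.castLE hkm s)) v = 0) :
    rmul hkm q e1 e2 x y v = x v * y v := by
  simp [rmul, hv]

lemma rmul_apply_of_pairZ_eq_ite (x y : (Fin n → ℤ) → K) (r : Fin k) {u : Fin n → ℤ}
    (hu : ∀ s : Fin k, pairZ (q (Fin.castLE hkm s)) u = if s = r then 1 else 0) :
    rmul hkm q e1 e2 x y u = x u * y (u + e1 r) + x (u + e2 r) * y u := by
  have hu' : ∀ s, pairZ (q (Fin.castLE hkm s)) u = ((Pi.single r 1 : Fin k → ℕ) s : ℤ) := by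
    intro s; rw [hu s, Pi.single_apply]; split_ifs <;> rfl
  have hpair : Fintype.piFinset (fun s => range ((Pi.single r 1 : Fin k → ℕ) s + 1)) =
      {0, Pi.single r 1} := by
    ext i; simp [Fintype.mem_piFinset, ← Pi.le_def, le_single_one_iff]
  have hne : (0 : Fin k → ℕ) ≠ Pi.single r 1 := by
    intro h; simpa using congrFun h r
  simp only [rmul, hu', Int.toNat_natCast, hpair]
  rw [sum_pair hne]
  simp [Pi.single_apply, ite_smul, sum_ite_eq']

lemma pairZ_add_root_eq_zero {e : Fin k → Fin n → ℤ} (he : Compatible hkm q e) {r : Fin k}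
    {u : Fin n → ℤ}
    (hu : ∀ s : Fin k, pairZ (q (Fin.castLE hkm s)) u = if s = r then 1 else 0) (s : Fin k) :
    pairZ (q (Fin.castLE hkm s)) (u + e r) = 0 := by
  rw [pairZ_add, hu s, he.1 r s]
  by_cases h : s = r
  · simp [h]
  · simp [h, Ne.symm h]

lemma inS_add_root {e : Fin k → Fin n → ℤ} (he : Compatible hkm q e) {r : Fin k}
    {u : Fin n → ℤ} (hS : InS q u)
    (hu : ∀ s : Fin k, pairZ (q (Fin.castLE hkm s)) u = if s = r then 1 else 0) :
    InS q (u + e r) := by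
  intro j
  rcases lt_or_ge (j : ℕ) k with hj | hj
  · have : j = Fin.castLE hkm ⟨j, hj⟩ := rfl
    rw [this, pairZ_add_root_eq_zero he hu]
  · rw [pairZ_add]
    exact add_nonneg (hS j) (he.2 r j hj)

lemma eq_one_of_rmul_self_apply {x : (Fin n → ℤ) → K} {v : Fin n → ℤ}
    (hv : ∀ s : Fin k, pairZ (q (Fin.castLE hkm s)) v = 0)
    (hid : rmul hkm q e1 e2 x x v = x v) (hne : x v ≠ 0) : x v = 1 := by
  rw [rmul_apply_of_pairZ_eq_zero x x hv] at hid
  exact mul_left_cancel₀ hne (hid.trans (mul_one _).symm)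

end Demazure

theorem statement_13_general {n m k : ℕ} {K : Type*} [Field K]
    (hkm : k ≤ m)
    (q : Fin m → Fin n → ℤ) (e1 e2 : Fin k → Fin n → ℤ)
    (he1 : Compatible hkm q e1) (he2 : Compatible hkm q e2)
    (x : (Fin n → ℤ) → K)
    (hid : ∀ u : Fin n → ℤ, InS q u → rmul hkm q e1 e2 x x u = x u)
    (r : Fin k) (u : Fin n → ℤ) (hu : InS q u)
    (hdel : ∀ s : Fin k, pairZ (q (Fin.castLE hkm s)) u = if s = r then 1 else 0)
    (h1 : x (u + e1 r) ≠ 0) (h2 : x (u + e2 r) ≠ 0) :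
    x u = 0 := by
  have hroot : ∀ e, Compatible hkm q e → x (u + e r) ≠ 0 → x (u + e r) = 1 :=
    fun e he hne => eq_one_of_rmul_self_apply (pairZ_add_root_eq_zero he hdel)
      (hid _ (inS_add_root he hu hdel)) hne
  have hsum := hid u hu
  rw [rmul_apply_of_pairZ_eq_ite x x r hdel, hroot e1 he1 h1, hroot e2 he2 h2] at hsum
  linear_combination hsum

theorem statement_13 {n m k : ℕ} {K : Type*} [Field K] [CharZero K]
    (hn : 1 ≤ n) (hk : 1 ≤ k) (hkm : k ≤ m)
    (q : Fin m → Fin n → ℤ) (e1 e2 : Fin k → Fin n → ℤ)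
    (he1 : Compatible hkm q e1) (he2 : Compatible hkm q e2)
    (x : (Fin n → ℤ) → K) (hx : IsPoint q x)
    (hid : ∀ u : Fin n → ℤ, InS q u → rmul hkm q e1 e2 x x u = x u)
    (r : Fin k) (u : Fin n → ℤ) (hu : InS q u)
    (hdel : ∀ s : Fin k, pairZ (q (Fin.castLE hkm s)) u = if s = r then 1 else 0)
    (h1 : x (u + e1 r) ≠ 0) (h2 : x (u + e2 r) ≠ 0) :
    x u = 0 :=
  statement_13_general hkm q e1 e2 he1 he2 x hid r u hu hdel h1 h2
end
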